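/- arXiv:2403.15138 — 6 statements merged into one kernel-verified Lean document; each statement's English description precedes it below -/
import Mathlib

section
/- Let F be a field, let n ≥ 1, and let A ∈ M_n(F) be a non-derogatory matrix. Then for every monic polynomial q(x) ∈ F[x] of degree n whose trace coincides with the trace of A (i.e. the coefficient of x^{n-1} in q equals minus the trace of A), there exists a square-zero matrix N ∈ M_n(F) such that the characteristic polynomial of A + N equals q(x). -/
/-!
A non-derogatory endomorphism `f` of an `n`-dimensional space has a cyclic vector `v` (the
`K[X]`-module `V` is finitely generated and torsion over a PID, so some element has annihilator
`(minpoly f) = (χ)` with `χ = charpoly f`), hence `v, f v, …, f^(n-1) v` is a basis. Let `φ` be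
the last coordinate in this basis and `w = (χ - q)(f) v`. The rank-one map `N = φ(·) • w` kills
`v, …, f^(n-2) v`, so `f + N` moves the basis like `f` except that `f^(n-1) v ↦ f^n v + w`;
therefore `q(f + N) v = q(f) v + w = χ(f) v = 0`, and since no nonzero polynomial of degree `< n`
kills `v`, `charpoly (f + N) = q`. Finally `N² = φ(w) N`, and `φ(w)` is the coefficient of
`X^(n-1)` in `χ - q`, which vanishes by the trace condition.
-/

open Polynomial Module

theorem Polynomial.Monic.degree_sub_lt {R : Type*} [Ring R] [Nontrivial R] {p q : R[X]} {n : ℕ}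
    (hp : p.Monic) (hq : q.Monic) (hpn : p.natDegree = n) (hqn : q.natDegree = n) :
    (p - q).degree < n := by
  have hpd : p.degree = n := by rw [degree_eq_natDegree hp.ne_zero, hpn]
  rw [← hpd]
  refine degree_sub_lt_left ?_ hp.ne_zero (by rw [hp.leadingCoeff, hq.leadingCoeff])
  rw [hpd, degree_eq_natDegree hq.ne_zero, hqn]

theorem LinearMap.smulRight_sq_eq_zero {R M : Type*} [Semiring R] [AddCommMonoid M] [Module R M]
    {φ : M →ₗ[R] R} {w : M} (h : φ w = 0) : φ.smulRight w ^ 2 = 0 := by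
  ext x
  simp [sq, h]

namespace Module.End

section CommRing

variable {R M : Type*} [CommRing R] [AddCommGroup M] [Module R M]

theorem aeval_apply_eq_sum_fin (f : End R M) (v : M) {n : ℕ} {p : R[X]} (hp : p.degree < n) :
    aeval f p v = ∑ i : Fin n, p.coeff i • (f ^ (i : ℕ)) v := by
  rw [aeval_endomorphism, sum_fin (fun i c => c • (f ^ i) v) (fun _ => zero_smul R _) hp]

theorem linearIndependent_pow_apply_iff (f : End R M) (v : M) (n : ℕ) :
    LinearIndependent R (fun i : Fin n => (f ^ (i : ℕ)) v) ↔
      ∀ p : R[X], p.degree < n → aeval f p v = 0 → p = 0 := by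
  refine ⟨fun hli p hp hpv => ?_, fun h => Fintype.linearIndependent_iff.2 fun g hg i => ?_⟩
  · ext i
    rcases lt_or_ge i n with hi | hi
    · rw [aeval_apply_eq_sum_fin f v hp] at hpv
      exact Fintype.linearIndependent_iff.1 hli (fun i => p.coeff i) hpv ⟨i, hi⟩
    · exact coeff_eq_zero_of_degree_lt (hp.trans_le (by exact_mod_cast hi))
  · set p : R[X] := ∑ j : Fin n, C (g j) * X ^ (j : ℕ)
    have hcoeff (j : Fin n) : p.coeff j = g j := by
      simp [p, Fin.val_inj]
    have hdeg : p.degree < n := degree_sum_fin_lt g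
    have hp : p = 0 := h p hdeg <| by
      simpa only [aeval_apply_eq_sum_fin f v hdeg, hcoeff] using hg
    rw [← hcoeff, hp, coeff_zero]

theorem charpoly_eq_of_linearIndependent_pow_apply [Nontrivial R] [Free R M] [Module.Finite R M]
    {g : End R M} {v : M} (hv : LinearIndependent R fun i : Fin (finrank R M) => (g ^ (i : ℕ)) v)
    {q : R[X]} (hq : q.Monic) (hdeg : q.natDegree = finrank R M) (hqv : aeval g q v = 0) :
    g.charpoly = q := by
  refine sub_eq_zero.1 <| (linearIndependent_pow_apply_iff g v _).1 hv _
    (g.charpoly_monic.degree_sub_lt hq g.charpoly_natDegree hdeg) ?_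
  rw [map_sub, LinearMap.sub_apply, LinearMap.aeval_self_charpoly, hqv, LinearMap.zero_apply,
    sub_zero]

theorem add_smulRight_pow_apply (f : End R M) {φ : M →ₗ[R] R} (w : M) {v : M} {k : ℕ}
    (hφ : ∀ i < k, φ ((f ^ i) v) = 0) : ∀ i ≤ k, ((f + φ.smulRight w) ^ i) v = (f ^ i) v := by
  intro i
  induction i with
  | zero => simp
  | succ i ih =>
    intro hi
    rw [pow_succ', mul_apply, ih (by omega), LinearMap.add_apply,
      LinearMap.smulRight_apply, hφ i (by omega), zero_smul, add_zero, ← mul_apply,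
      ← pow_succ']

theorem aeval_apply_eq_add_of_pow_apply_eq {f g : End R M} {v w : M} {n : ℕ}
    (hlt : ∀ i < n, (g ^ i) v = (f ^ i) v) (hn : (g ^ n) v = (f ^ n) v + w) {p : R[X]}
    (hp : p.natDegree ≤ n) : aeval g p v = aeval f p v + p.coeff n • w := by
  have hdeg : p.degree < ↑(n + 1) :=
    degree_le_natDegree.trans_lt (by exact_mod_cast Nat.lt_succ_of_le hp)
  simp only [aeval_apply_eq_sum_fin _ v hdeg, Fin.sum_univ_castSucc, Fin.val_castSucc,
    Fin.val_last, hn, smul_add, hlt _ (Fin.is_lt _)]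
  abel

end CommRing

variable {K V : Type*} [Field K] [AddCommGroup V] [Module K V]

theorem exists_linearIndependent_pow_apply [FiniteDimensional K V] (f : End K V)
    (hf : minpoly K f = f.charpoly) :
    ∃ v : V, LinearIndependent K fun i : Fin (finrank K V) => (f ^ (i : ℕ)) v := by
  obtain ⟨x, hx⟩ := exists_ker_toSpanSingleton_eq_annihilator K[X] (AEval' f)
  obtain ⟨v, rfl⟩ := (AEval'.of f).surjective x
  rw [← span_minpoly_eq_annihilator] at hx
  refine ⟨v, (linearIndependent_pow_apply_iff f v _).2 fun p hp hpv => ?_⟩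
  have hdvd : minpoly K f ∣ p := by
    rw [← Ideal.mem_span_singleton, ← hx, LinearMap.mem_ker, LinearMap.toSpanSingleton_apply,
      ← AEval.of_aeval_smul]
    simp [hpv]
  refine eq_zero_of_dvd_of_degree_lt hdvd ?_
  rwa [hf, degree_eq_natDegree f.charpoly_monic.ne_zero, LinearMap.charpoly_natDegree]

theorem exists_coord_aeval_apply_eq_coeff [FiniteDimensional K V] {f : End K V} {v : V}
    (hv : LinearIndependent K fun i : Fin (finrank K V) => (f ^ (i : ℕ)) v) {k : ℕ}
    (hk : k < finrank K V) :
    ∃ φ : V →ₗ[K] K, ∀ p : K[X], p.degree < finrank K V → φ (aeval f p v) = p.coeff k := by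
  have : Nonempty (Fin (finrank K V)) := ⟨⟨k, hk⟩⟩
  let B := basisOfLinearIndependentOfCardEqFinrank hv (Fintype.card_fin _)
  have hB (i : Fin (finrank K V)) : B i = (f ^ (i : ℕ)) v := by simp [B]
  refine ⟨B.coord ⟨k, hk⟩, fun p hp => ?_⟩
  simp only [aeval_apply_eq_sum_fin f v hp, ← hB, Basis.coord_apply, B.repr_sum_self]

theorem exists_sq_eq_zero_charpoly_add_eq [FiniteDimensional K V] (f : End K V)
    (hf : minpoly K f = f.charpoly) {q : K[X]} (hq : q.Monic) (hdeg : q.natDegree = finrank K V)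
    (hcoeff : q.coeff (finrank K V - 1) = f.charpoly.coeff (finrank K V - 1)) :
    ∃ N : End K V, N ^ 2 = 0 ∧ (f + N).charpoly = q := by
  obtain ⟨v, hv⟩ := exists_linearIndependent_pow_apply f hf
  by_cases h0 : finrank K V = 0
  · have : Subsingleton V := finrank_zero_iff.1 h0
    refine ⟨0, zero_pow two_ne_zero, ?_⟩
    rw [add_zero]
    exact charpoly_eq_of_linearIndependent_pow_apply hv hq hdeg (Subsingleton.elim _ _)
  obtain ⟨k, hk⟩ := Nat.exists_eq_add_one_of_ne_zero h0
  obtain ⟨φ, hφ⟩ := exists_coord_aeval_apply_eq_coeff hv (k := k) (by omega)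
  have hφpow (i : ℕ) (hi : i ≤ k) : φ ((f ^ i) v) = if k = i then 1 else 0 := by
    rw [← aeval_X_pow (R := K), hφ _ (by rw [degree_X_pow]; exact_mod_cast (by omega)),
      coeff_X_pow]
  let w := aeval f (f.charpoly - q) v
  have hw : φ w = 0 := by
    rw [hφ _ (f.charpoly_monic.degree_sub_lt hq f.charpoly_natDegree hdeg), coeff_sub,
      show k = finrank K V - 1 by omega, hcoeff, sub_self]
  refine ⟨φ.smulRight w, LinearMap.smulRight_sq_eq_zero hw, ?_⟩
  have hpow := add_smulRight_pow_apply f w (k := k) fun i hi => by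
    rw [hφpow i hi.le, if_neg hi.ne']
  refine charpoly_eq_of_linearIndependent_pow_apply (v := v) ?_ hq hdeg ?_
  · have hfamily : (fun i : Fin (finrank K V) => ((f + φ.smulRight w) ^ (i : ℕ)) v) =
        fun i : Fin (finrank K V) => (f ^ (i : ℕ)) v := funext fun i => hpow i (by omega)
    rwa [hfamily]
  · have hlast : ((f + φ.smulRight w) ^ (k + 1)) v = (f ^ (k + 1)) v + w := by
      rw [pow_succ', mul_apply, hpow k le_rfl, LinearMap.add_apply, LinearMap.smulRight_apply,
        hφpow k le_rfl, if_pos rfl, one_smul, ← mul_apply, ← pow_succ']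
    rw [aeval_apply_eq_add_of_pow_apply_eq (fun i hi => hpow i (by omega)) hlast
      (hdeg.trans hk).le, ← hk, ← hdeg, hq.coeff_natDegree, one_smul]
    simp [w, LinearMap.aeval_self_charpoly]

end Module.End

open Matrix

theorem prescribed_charpoly_nonderogatory
    (F : Type*) [Field F] (n : ℕ) (hn : 1 ≤ n)
    (A : Matrix (Fin n) (Fin n) F)
    (hA : minpoly F A = A.charpoly)
    (q : Polynomial F) (hq : q.Monic) (hqdeg : q.natDegree = n)
    (htr : q.coeff (n - 1) = - A.trace) :
    ∃ N : Matrix (Fin n) (Fin n) F, N ^ 2 = 0 ∧ (A + N).charpoly = q := by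
  have : Nonempty (Fin n) := ⟨⟨0, hn⟩⟩
  obtain ⟨N, hN, hcharpoly⟩ := Module.End.exists_sq_eq_zero_charpoly_add_eq (toLin' A)
    (by rw [minpoly_toLin', hA, charpoly_toLin']) hq (by rw [hqdeg, finrank_fin_fun])
    (by rw [finrank_fin_fun, charpoly_toLin', htr, trace_eq_neg_charpoly_coeff, Fintype.card_fin,
      neg_neg])
  refine ⟨LinearMap.toMatrix' N, ?_, ?_⟩
  · rw [sq, ← LinearMap.toMatrix'_mul, ← sq, hN, map_zero]
  · rw [← charpoly_toLin', map_add, toLin'_toMatrix', hcharpoly]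
end

section
/- Let F be a field, let n ≥ 1, let p(x) = xⁿ + u_{n-1}x^{n-1} + ⋯ + u₀ ∈ F[x] be monic of degree n, and let A be the companion matrix of p(x). Then for every monic polynomial q(x) = xⁿ + u_{n-1}x^{n-1} + v_{n-2}x^{n-2} + ⋯ + v₀ ∈ F[x] of degree n whose coefficient of x^{n-1} equals u_{n-1}, there exists a square-zero matrix N ∈ M_n(F) such that A + N is the companion matrix of q(x); in particular the characteristic polynomial of A + N equals q(x) and A + N is non-derogatory. -/
open Polynomial Matrix

/-- The companion matrix of a (monic) polynomial `p`, as an `n × n` matrix: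
1's on the subdiagonal, last column `(-p.coeff 0, …, -p.coeff (n-1))ᵀ`, zeros elsewhere. -/
def companionMatrix {F : Type*} [Field F] (n : ℕ) (p : Polynomial F) :
    Matrix (Fin n) (Fin n) F :=
  Matrix.of fun i j =>
    if (j : ℕ) = n - 1 then -p.coeff i
    else if (i : ℕ) = (j : ℕ) + 1 then 1 else 0

/-!
The companion matrices of `p` and `q` differ only in their last column, so `N` is the rank-one
matrix `v eₙᵀ` with `v i = pᵢ - qᵢ`, and `N² = (eₙᵀ v) N = (p_{n-1} - q_{n-1}) N = 0`.
The companion matrix of a monic `q` is the matrix of multiplication by the root in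
`F[X] ⧸ (q)` with respect to the power basis, so its characteristic and minimal polynomials
are both `q`.
-/

theorem Matrix.vecMulVec_sq_eq_zero {ι R : Type*} [Fintype ι] [DecidableEq ι] [Semiring R]
    {v w : ι → R} (h : w ⬝ᵥ v = 0) : vecMulVec v w ^ 2 = 0 := by
  rw [sq, vecMulVec_mul_vecMulVec, h, zero_smul, vecMulVec_zero]

theorem companionMatrix_eq_add_vecMulVec {F : Type*} [Field F] (n : ℕ) (p q : F[X]) :
    companionMatrix n q = companionMatrix n p +
      vecMulVec (fun i : Fin n => p.coeff i - q.coeff i)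
        (fun j : Fin n => if (j : ℕ) = n - 1 then 1 else 0) := by
  ext i j
  by_cases hj : (j : ℕ) = n - 1
  · simp only [companionMatrix, vecMulVec_apply, of_apply, Matrix.add_apply, hj, if_true, mul_one]
    ring
  · simp [companionMatrix, vecMulVec_apply, hj]

theorem PowerBasis.companionMatrix_minpoly_gen {F S : Type*} [Field F] [Ring S] [Algebra F S]
    (pb : PowerBasis F S) :
    companionMatrix pb.dim (minpoly F pb.gen) = Algebra.leftMulMatrix pb.basis pb.gen := by
  rw [pb.leftMulMatrix, pb.minpolyGen_eq]
  ext i j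
  simp only [companionMatrix, of_apply]
  congr 1
  simp only [eq_iff_iff]
  omega

theorem exists_powerBasis_minpoly_gen_eq {F : Type*} [Field F] {n : ℕ} {q : F[X]}
    (hq : q.Monic) (hd : q.natDegree = n) :
    ∃ pb : PowerBasis F (AdjoinRoot q), pb.dim = n ∧ minpoly F pb.gen = q :=
  ⟨AdjoinRoot.powerBasis hq.ne_zero, hd, AdjoinRoot.minpoly_powerBasis_gen_of_monic hq⟩

theorem charpoly_companionMatrix {F : Type*} [Field F] {n : ℕ} {q : F[X]}
    (hq : q.Monic) (hd : q.natDegree = n) : (companionMatrix n q).charpoly = q := by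
  obtain ⟨pb, rfl, hpb⟩ := exists_powerBasis_minpoly_gen_eq hq hd
  have h := congrArg charpoly pb.companionMatrix_minpoly_gen
  rwa [charpoly_leftMulMatrix, hpb] at h

theorem minpoly_companionMatrix {F : Type*} [Field F] {n : ℕ} {q : F[X]}
    (hq : q.Monic) (hd : q.natDegree = n) : minpoly F (companionMatrix n q) = q := by
  obtain ⟨pb, rfl, hpb⟩ := exists_powerBasis_minpoly_gen_eq hq hd
  have h := congrArg (minpoly F) pb.companionMatrix_minpoly_gen
  rwa [minpoly.algHom_eq _ (Algebra.leftMulMatrix_injective _), hpb] at h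

theorem prescribed_charpoly_companion_general
    (F : Type*) [Field F] (n : ℕ)
    (p : Polynomial F)
    (A : Matrix (Fin n) (Fin n) F) (hA : A = companionMatrix n p)
    (q : Polynomial F) (hq : q.Monic) (hqdeg : q.natDegree = n)
    (htr : q.coeff (n - 1) = p.coeff (n - 1)) :
    ∃ N : Matrix (Fin n) (Fin n) F, N ^ 2 = 0 ∧
      A + N = companionMatrix n q ∧
      (A + N).charpoly = q ∧
      minpoly F (A + N) = (A + N).charpoly := by
  set N := vecMulVec (fun i : Fin n => p.coeff i - q.coeff i)
    (fun j : Fin n => if (j : ℕ) = n - 1 then 1 else 0)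
  have hAN : A + N = companionMatrix n q := by
    rw [hA, companionMatrix_eq_add_vecMulVec n p q]
  have hsq : N ^ 2 = 0 := by
    apply vecMulVec_sq_eq_zero
    refine Finset.sum_eq_zero fun j _ => ?_
    dsimp only
    split_ifs with hj
    · rw [hj, htr, sub_self, one_mul]
    · exact zero_mul _
  refine ⟨N, hsq, hAN, ?_, ?_⟩
  all_goals rw [hAN, charpoly_companionMatrix hq hqdeg]
  exact minpoly_companionMatrix hq hqdeg

theorem prescribed_charpoly_companion
    (F : Type*) [Field F] (n : ℕ) (hn : 1 ≤ n)
    (p : Polynomial F) (hp : p.Monic) (hpdeg : p.natDegree = n)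
    (A : Matrix (Fin n) (Fin n) F) (hA : A = companionMatrix n p)
    (q : Polynomial F) (hq : q.Monic) (hqdeg : q.natDegree = n)
    (htr : q.coeff (n - 1) = p.coeff (n - 1)) :
    ∃ N : Matrix (Fin n) (Fin n) F, N ^ 2 = 0 ∧
      A + N = companionMatrix n q ∧
      (A + N).charpoly = q ∧
      minpoly F (A + N) = (A + N).charpoly :=
  prescribed_charpoly_companion_general F n p A hA q hq hqdeg htr
end

section
/- Let F be a field, let n ≥ 2, and let a₁, …, a_n, u₂, …, u_n ∈ F. Consider the n×n matrix A over the polynomial ring F[x] whose first row is (a₁ + x, a₂, a₃, …, a_{n-1}, a_n); whose i-th row, for 2 ≤ i ≤ n−1, has x in position (i,i), u_i in position (i,n), and zeros elsewhere; and whose last row has x in position (n,1), x + u_n in position (n,n), and zeros elsewhere. Then det(A) = xⁿ + u_n x^{n-1} + (a₁ − a_n)x^{n-1} + a₁u_n x^{n-2} + (Σ_{i=2}^{n-1} a_i u_i) x^{n-2}. -/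
/-!
Write `A = X • 1 + U * V` with `U` of size `n × 3` and `V` of size `3 × n`: the first row of `A`,
its last column and the entry `X` in position `(n, 1)` form a rank-three perturbation of `X • 1`.
The Weinstein–Aronszajn identity `X ^ 3 * det (X • 1 + U * V) = X ^ n * det (X • 1 + V * U)`
reduces the determinant to that of a `3 × 3` matrix, and `X` is cancelled since it is regular.
-/

open Polynomial Matrix Finset

namespace Matrix

variable {R : Type*} [CommRing R] {ι : Type*} [Fintype ι] [DecidableEq ι]

theorem pow_card_mul_det_scalar_add_mul_comm {κ : Type*} [Fintype κ] [DecidableEq κ]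
    (t : R) (U : Matrix ι κ R) (V : Matrix κ ι R) :
    t ^ Fintype.card κ * (scalar ι t + U * V).det
      = t ^ Fintype.card ι * (scalar κ t + V * U).det := by
  simpa [eval_charpoly, sub_eq_add_neg] using congrArg (eval t) (charpoly_mul_comm' (-U) V)

theorem det_scalar_add_vecMulVec_three {t : R} (ht : IsRegular t) {p q : ι} (hpq : p ≠ q)
    (a w : ι → R) (hw : w p = 0) :
    (scalar ι t + vecMulVec (Pi.single p 1) a + vecMulVec w (Pi.single q 1)
        + vecMulVec (Pi.single q t) (Pi.single p 1)).det
      = t ^ (Fintype.card ι - 2) * ((t + a p) * (t + w q) + a ⬝ᵥ w - a q * (t + w q)) := by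
  let U : Matrix ι (Fin 3) R :=
    of fun i => ![(Pi.single p 1 : ι → R) i, w i, (Pi.single q t : ι → R) i]
  let V : Matrix (Fin 3) ι R := of ![a, Pi.single q 1, Pi.single p 1]
  have hUV : vecMulVec (Pi.single p 1) a + vecMulVec w (Pi.single q 1)
      + vecMulVec (Pi.single q t) (Pi.single p 1) = U * V := by
    ext i j : 1
    simp [U, V, mul_apply, Fin.sum_univ_three, vecMulVec_apply]
  have hVU : scalar (Fin 3) t + V * U
      = !![t + a p, a ⬝ᵥ w, a q * t; 0, t + w q, t; 1, 0, t] := by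
    ext i j : 1
    fin_cases i <;> fin_cases j <;>
      simp [U, V, vecMul, dotProduct, Pi.single_apply, hw, hpq, hpq.symm]
  have hcard : 2 ≤ Fintype.card ι := Fintype.one_lt_card_iff.2 ⟨p, q, hpq⟩
  have key := pow_card_mul_det_scalar_add_mul_comm t U V
  rw [hVU, det_fin_three, Fintype.card_fin, ← hUV, ← add_assoc, ← add_assoc,
    ← Nat.sub_add_cancel hcard] at key
  simp only [of_apply, cons_val', cons_val_zero, cons_val_fin_one, cons_val_one,
    cons_val, mul_zero, sub_zero, zero_mul, mul_one, add_zero] at key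
  refine (ht.pow 3).left ?_
  linear_combination key

theorem dotProduct_update_zero {p q : ι} (hpq : p ≠ q) (f g : ι → R) :
    f ⬝ᵥ Function.update g p 0 = f q * g q + ∑ i ∈ (univ.erase p).erase q, f i * g i := by
  have hq : q ∈ univ.erase p := mem_erase.2 ⟨hpq.symm, mem_univ q⟩
  rw [dotProduct, ← add_sum_erase _ _ (mem_univ p), ← add_sum_erase _ _ hq,
    Function.update_self, Function.update_of_ne hpq.symm, mul_zero, zero_add]
  congr 1
  exact sum_congr rfl fun i hi => by
    rw [Function.update_of_ne (ne_of_mem_erase (mem_of_mem_erase hi))]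

end Matrix

theorem det_special_matrix
    (F : Type*) [Field F] (n : ℕ) (hn : 2 ≤ n)
    (a u : Fin n → F)
    (A : Matrix (Fin n) (Fin n) (Polynomial F))
    (hA : A = Matrix.of fun (i j : Fin n) =>
      if (i : ℕ) = 0 then
        (if (j : ℕ) = 0 then C (a ⟨0, by omega⟩) + X else C (a j))
      else if (i : ℕ) = n - 1 then
        (if (j : ℕ) = 0 then X
         else if j = i then X + C (u ⟨n - 1, by omega⟩) else 0)
      else
        (if j = i then X
         else if (j : ℕ) = n - 1 then C (u i) else 0)) :
    A.det = X ^ n + C (u ⟨n - 1, by omega⟩) * X ^ (n - 1)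
      + C (a ⟨0, by omega⟩ - a ⟨n - 1, by omega⟩) * X ^ (n - 1)
      + C (a ⟨0, by omega⟩ * u ⟨n - 1, by omega⟩) * X ^ (n - 2)
      + C (∑ i ∈ Finset.univ.filter
            (fun i : Fin n => (i : ℕ) ≠ 0 ∧ (i : ℕ) ≠ n - 1), a i * u i)
          * X ^ (n - 2) := by
  set p : Fin n := ⟨0, by omega⟩
  set q : Fin n := ⟨n - 1, by omega⟩
  have hpq : p ≠ q := by simp [p, q, Fin.ext_iff]; omega
  have hp : ∀ i : Fin n, (i : ℕ) = 0 ↔ i = p := by simp [p, Fin.ext_iff]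
  have hq : ∀ i : Fin n, (i : ℕ) = n - 1 ↔ i = q := by simp [q, Fin.ext_iff]
  have hA' : A = scalar (Fin n) X + vecMulVec (Pi.single p 1) (C ∘ a)
      + vecMulVec (Function.update (C ∘ u) p 0) (Pi.single q 1)
      + vecMulVec (Pi.single q X) (Pi.single p 1) := by
    clear_value p q
    subst hA
    ext i j : 1
    simp only [hp, hq, of_apply, Matrix.add_apply, scalar_apply, diagonal_apply,
      vecMulVec_apply, Pi.single_apply, Function.update_apply, Function.comp_apply]
    split_ifs <;> subst_vars <;> simp_all [add_comm]
  have hmid : (univ.erase p).erase q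
      = univ.filter (fun i : Fin n => (i : ℕ) ≠ 0 ∧ (i : ℕ) ≠ n - 1) := by
    ext i
    simp [hp, hq, and_comm]
  rw [hA', det_scalar_add_vecMulVec_three isRegular_X hpq _ _ (Function.update_self ..),
    dotProduct_update_zero hpq, hmid, Fintype.card_fin]
  simp only [Function.update_of_ne hpq.symm, Function.comp_apply, map_sub, map_mul, map_sum]
  obtain ⟨m, rfl⟩ := Nat.exists_eq_add_of_le' hn
  simp only [Nat.add_sub_cancel, Nat.add_succ_sub_one]
  ring
end

section
/- Let A ∈ M₄(ℝ) be the block-diagonal matrix with blocks 0_{2×2} and the 2×2 matrix ((0, −1), (1, 0)). Then there does not exist a square-zero matrix N ∈ M₄(ℝ) such that the characteristic polynomial of A + N equals x⁴ + 1. -/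
open Polynomial Matrix

theorem no_squareZero_giving_X_pow_four_add_one
    (A : Matrix (Fin 2 ⊕ Fin 2) (Fin 2 ⊕ Fin 2) ℝ)
    (hA : A = Matrix.fromBlocks 0 0 0 !![0, -1; 1, 0]) :
    ¬ ∃ N : Matrix (Fin 2 ⊕ Fin 2) (Fin 2 ⊕ Fin 2) ℝ,
        N ^ 2 = 0 ∧ (A + N).charpoly = X ^ 4 + 1 := by
  rintro ⟨N, hN2, hchar⟩
  set R : Matrix (Fin 2) (Fin 2) ℝ := !![0, -1; 1, 0] with hR
  set M := A + N with hM
  -- Cayley–Hamilton gives M ^ 4 = -1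
  have hM4 : M ^ 4 = -1 := by
    have h := M.aeval_self_charpoly
    rw [hchar] at h
    have h' : M ^ 4 + 1 = 0 := by simpa using h
    exact eq_neg_of_add_eq_zero_left h'
  -- block decomposition of N
  set a := N.toBlocks₁₁ with ha
  set b := N.toBlocks₁₂ with hb
  set c := N.toBlocks₂₁ with hc
  set d := N.toBlocks₂₂ with hd
  have hN : N = fromBlocks a b c d := (fromBlocks_toBlocks N).symm
  have hRR : R * R = -1 := by
    rw [hR]
    norm_num [← Matrix.ext_iff, Fin.forall_fin_two, Matrix.mul_apply,
      Fin.sum_univ_two]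
  -- block equations from N^2 = 0
  have hN2' : fromBlocks (a*a + b*c) (a*b + b*d) (c*a + d*c) (c*b + d*d)
      = fromBlocks 0 0 0 0 := by
    rw [← Matrix.fromBlocks_multiply, ← hN, ← pow_two, hN2, Matrix.fromBlocks_zero]
  have e11 : a*a + b*c = 0 := congrArg Matrix.toBlocks₁₁ hN2'
  have e12 : a*b + b*d = 0 := congrArg Matrix.toBlocks₁₂ hN2'
  have e21 : c*a + d*c = 0 := congrArg Matrix.toBlocks₂₁ hN2'
  have e22 : c*b + d*d = 0 := congrArg Matrix.toBlocks₂₂ hN2'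
  -- M as blocks
  have hMb : M = fromBlocks a b c (R + d) := by
    rw [hM, hA, hN, Matrix.fromBlocks_add]
    simp
  -- M^2
  have h12 : a*b + b*(R+d) = b*R := by
    rw [mul_add, eq_neg_of_add_eq_zero_left e12]; abel
  have h21 : c*a + (R+d)*c = R*c := by
    rw [add_mul, eq_neg_of_add_eq_zero_left e21]; abel
  have hM2 : M ^ 2 = fromBlocks 0 (b*R) (R*c) (c*b + (R+d)*(R+d)) := by
    rw [pow_two, hMb, Matrix.fromBlocks_multiply, e11, h12, h21]
  -- -1 as blocks
  have hneg1 : (-1 : Matrix (Fin 2 ⊕ Fin 2) (Fin 2 ⊕ Fin 2) ℝ)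
      = fromBlocks (-1) 0 0 (-1) := by
    ext (i | i) (j | j) <;> simp [Matrix.fromBlocks, Matrix.one_apply]
  -- M^4 blockwise
  have hM4' : fromBlocks ((b*R)*(R*c) + 0) ((b*R)*(c*b + (R+d)*(R+d)))
      ((c*b + (R+d)*(R+d))*(R*c))
      ((R*c)*(b*R) + (c*b + (R+d)*(R+d))*(c*b + (R+d)*(R+d)))
      = fromBlocks (-1) 0 0 (-1) := by
    have h4 : M ^ 4 = M ^ 2 * M ^ 2 := by rw [← pow_add]
    rw [h4, hM2, Matrix.fromBlocks_multiply] at hM4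
    rw [hneg1] at hM4
    convert hM4 using 2 <;> noncomm_ring
  have tl : (b*R)*(R*c) + 0 = -1 := congrArg Matrix.toBlocks₁₁ hM4'
  have br : (R*c)*(b*R) + (c*b + (R+d)*(R+d))*(c*b + (R+d)*(R+d)) = -1 :=
    congrArg Matrix.toBlocks₂₂ hM4'
  -- b * c = 1, hence c * b = 1 and d * d = -1
  have hbc : b * c = 1 := by
    have h1 : (b*R)*(R*c) + 0 = -(b*c) := by
      have : (b*R)*(R*c) = b*(R*R)*c := by noncomm_ring
      rw [this, hRR]
      noncomm_ring
    have := h1.symm.trans tl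
    exact neg_injective this
  have hcb : c * b = 1 := mul_eq_one_comm.mp hbc
  have hdd : d * d = -1 := by
    rw [hcb] at e22
    exact eq_neg_of_add_eq_zero_right e22
  -- bottom-right equation gives (R*d + d*R - 1)^2 = 0
  have hS : (R*d + d*R - 1) * (R*d + d*R - 1) = 0 := by
    have h1 : c*b + (R+d)*(R+d) = R*d + d*R - 1 := by
      rw [hcb, add_mul, mul_add, mul_add, hRR, hdd]; abel
    have h2 : (R*c)*(b*R) = -1 := by
      have h3 : (R*c)*(b*R) = R*(c*b)*R := by noncomm_ring
      rw [h3, hcb, mul_one, hRR]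
    rw [h1, h2] at br
    have := congrArg (fun X => X + 1) br
    simpa [add_assoc] using this
  -- pass to entries
  have hd2 : ∀ i j, (d * d) i j = (-1 : Matrix (Fin 2) (Fin 2) ℝ) i j := by
    rw [hdd]; intro i j; rfl
  have hS2 : ∀ i j, ((R*d + d*R - 1) * (R*d + d*R - 1)) i j = (0 : ℝ) := by
    rw [hS]; intro i j; rfl
  have f1 := hd2 0 0
  have f2 := hd2 0 1
  have f3 := hd2 1 0
  have f4 := hd2 1 1
  have g1 := hS2 0 0
  have g2 := hS2 0 1
  simp only [Matrix.mul_apply, Matrix.add_apply, Matrix.sub_apply, Matrix.neg_apply,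
    Matrix.one_apply, Fin.sum_univ_two, hR, Matrix.cons_val', Matrix.cons_val_zero,
    Matrix.cons_val_one, Matrix.head_cons, Matrix.head_fin_const, Matrix.empty_val',
    Matrix.cons_val_fin_one] at f1 f2 f3 f4 g1 g2
  norm_num at f1 f2 f3 f4 g1 g2
  nlinarith [sq_nonneg (d 0 1 - 1), sq_nonneg (d 1 0 + 1), sq_nonneg (d 0 0 + d 1 1),
    sq_nonneg (d 0 0 - d 1 1), sq_nonneg (d 0 0), sq_nonneg (d 1 1),
    sq_nonneg (d 0 1 - d 1 0 - 1), f1, f2, f3, f4, g1, g2]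
end

section
/- Let X ∈ M₂(ℝ) have entries n₁₁, n₁₂, n₂₁, n₂₂, let A ∈ M₄(ℝ) be the block-diagonal matrix with blocks 0_{2×2} and the 2×2 matrix ((0, −1), (1, 0)), and let N ∈ M₄(ℝ) be the block matrix with upper-left block X, upper-right block −X², lower-left block Id₂, and lower-right block −X. Then the characteristic polynomial of A + N equals x⁴ + (n₁₂ − n₂₁ + 1)x² − (n₁₁ + n₂₂)x + (n₁₁n₂₂ − n₁₂n₂₁). -/
/-!
`A + N` is a block matrix whose lower-left block is the identity, so its characteristic matrix
has lower-left block `-1` and its determinant collapses to the `2 × 2` determinant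
`det ((X - P) (X - S) - Q)` of the blocks `P = M`, `Q = -M²`, `S = J - M`, where
`J = !![0, -1; 1, 0]`. Since the scalar `X` commutes with `M`, the cross terms cancel and this is
`det (X² - X J + M J)`, which is read off directly.
-/

open Polynomial Matrix

namespace Matrix

variable {n R : Type*} [Fintype n] [DecidableEq n] [CommRing R]

theorem det_fromBlocks_zero_neg_one_one_zero :
    (fromBlocks 0 (-1) 1 0 : Matrix (n ⊕ n) (n ⊕ n) R).det = 1 := by
  have : (fromBlocks 0 (-1) 1 0 : Matrix (n ⊕ n) (n ⊕ n) R) =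
      fromBlocks 1 (-1) 0 1 * fromBlocks 1 0 1 1 * fromBlocks 1 (-1) 0 1 := by
    simp [fromBlocks_multiply]
  rw [this, det_mul, det_mul, det_fromBlocks_zero₂₁, det_fromBlocks_zero₁₂]
  simp

theorem det_fromBlocks_neg_one₂₁ (A B D : Matrix n n R) :
    (fromBlocks A B (-1) D).det = (A * D + B).det := by
  have hshear : fromBlocks A B (-1) D * (fromBlocks 1 D 0 1 * fromBlocks 0 (-1) 1 0) =
      fromBlocks (A * D + B) (-A) 0 1 := by
    simp [fromBlocks_multiply]
  simpa [det_fromBlocks_zero₂₁, det_fromBlocks_zero_neg_one_one_zero] using congrArg det hshear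

theorem charpoly_fromBlocks_one₂₁ (P Q S : Matrix n n R) :
    (fromBlocks P Q 1 S).charpoly = (charmatrix P * charmatrix S - Q.map C).det := by
  rw [charpoly, charmatrix_fromBlocks, Matrix.map_one _ C_0 C_1, det_fromBlocks_neg_one₂₁,
    sub_eq_add_neg]

theorem charmatrix_mul_charmatrix_sub_add (M J : Matrix n n R) :
    charmatrix M * charmatrix (J - M) + (M ^ 2).map C =
      scalar n (X : R[X]) * charmatrix J + (M * J).map C := by
  have hX : Commute (scalar n (X : R[X])) (C.mapMatrix M) :=
    scalar_commute _ (fun _ => Commute.all _ _) _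
  change _ + C.mapMatrix (M ^ 2) = _ + C.mapMatrix (M * J)
  simp only [charmatrix, map_sub, map_mul, sq, mul_sub, sub_mul, hX.eq]
  abel

end Matrix

theorem charpoly_of_block_perturbation
    (n₁₁ n₁₂ n₂₁ n₂₂ : ℝ)
    (M : Matrix (Fin 2) (Fin 2) ℝ)
    (hM : M = !![n₁₁, n₁₂; n₂₁, n₂₂])
    (A : Matrix (Fin 2 ⊕ Fin 2) (Fin 2 ⊕ Fin 2) ℝ)
    (hA : A = Matrix.fromBlocks 0 0 0 !![0, -1; 1, 0])
    (N : Matrix (Fin 2 ⊕ Fin 2) (Fin 2 ⊕ Fin 2) ℝ)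
    (hN : N = Matrix.fromBlocks M (-(M ^ 2)) 1 (-M)) :
    (A + N).charpoly =
      X ^ 4 + C (n₁₂ - n₂₁ + 1) * X ^ 2 - C (n₁₁ + n₂₂) * X
        + C (n₁₁ * n₂₂ - n₁₂ * n₂₁) := by
  set J : Matrix (Fin 2) (Fin 2) ℝ := !![0, -1; 1, 0]
  have hblocks : A + N = fromBlocks M (-(M ^ 2)) 1 (J - M) := by
    rw [hA, hN, fromBlocks_add, zero_add, zero_add, zero_add, sub_eq_add_neg]
  have hreduced : scalar (Fin 2) (X : ℝ[X]) * charmatrix J + (M * J).map C =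
      !![X ^ 2 + C n₁₂, X - C n₁₁; C n₂₂ - X, X ^ 2 - C n₂₁] := by
    subst hM
    ext i j
    fin_cases i <;> fin_cases j <;>
      simp [J, charmatrix_apply, Matrix.mul_apply, Fin.sum_univ_two, sq] <;> ring
  rw [hblocks, charpoly_fromBlocks_one₂₁, Matrix.map_neg _ (map_neg C), sub_neg_eq_add,
    charmatrix_mul_charmatrix_sub_add, hreduced, det_fin_two_of]
  simp only [map_add, map_sub, map_mul, map_one]
  ring
end

section
/- Let F be a field, let n, k ∈ ℕ with k < n − k, and let A ∈ M_n(F) be the block matrix with zero blocks of sizes k×k, k×(n−k), (n−k)×k and with an invertible matrix A₂₂ ∈ M_{n−k}(F) in the lower-right block. Then there exist an invertible matrix T ∈ M_n(F) and a square-zero matrix N ∈ M_n(F) such that A = T + N. -/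
open Matrix

theorem invertible_plus_squareZero
    (F : Type*) [Field F] (n k : ℕ) (hk : k < n - k)
    (A₂₂ : Matrix (Fin (n - k)) (Fin (n - k)) F)
    (hInv : IsUnit A₂₂)
    (A : Matrix (Fin k ⊕ Fin (n - k)) (Fin k ⊕ Fin (n - k)) F)
    (hA : A = Matrix.fromBlocks 0 0 0 A₂₂) :
    ∃ T N : Matrix (Fin k ⊕ Fin (n - k)) (Fin k ⊕ Fin (n - k)) F,
      IsUnit T ∧ N ^ 2 = 0 ∧ A = T + N := by
  set B : Matrix (Fin k) (Fin (n - k)) F :=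
    Matrix.of (fun i j => if j = Fin.castLE hk.le i then (1 : F) else 0) with hB
  have hBBt : B * Bᵀ = 1 := by
    ext i i'
    simp only [Matrix.mul_apply, Matrix.transpose_apply, hB, Matrix.of_apply]
    rw [Finset.sum_eq_single (Fin.castLE hk.le i)]
    · by_cases h : i = i'
      · simp [h, Matrix.one_apply]
      · have : ¬ (Fin.castLE hk.le i = Fin.castLE hk.le i') := by
          simp [Fin.castLE_injective hk.le |>.eq_iff, h]
        simp [this, Matrix.one_apply, h]
    · intro b _ hb
      simp [hb]
    · simp
  refine ⟨Matrix.fromBlocks 1 (-B) Bᵀ (A₂₂ - Bᵀ * B),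
    Matrix.fromBlocks (-1) B (-Bᵀ) (Bᵀ * B), ?_, ?_, ?_⟩
  · obtain ⟨u, hu⟩ := hInv
    have : Invertible A₂₂ := u.invertible.copy _ hu.symm
    have h1 : Invertible (1 : Matrix (Fin k) (Fin k) F) := invertibleOne
    have h2 : Invertible ((A₂₂ - Bᵀ * B) - Bᵀ * ⅟(1 : Matrix (Fin k) (Fin k) F) * (-B)) := by
      have : (A₂₂ - Bᵀ * B) - Bᵀ * ⅟(1 : Matrix (Fin k) (Fin k) F) * (-B) = A₂₂ := by
        simp [Matrix.mul_neg]
      rw [this]; infer_instance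
    letI := Matrix.fromBlocks₁₁Invertible 1 (-B) Bᵀ (A₂₂ - Bᵀ * B)
    exact isUnit_of_invertible _
  · rw [pow_two, Matrix.fromBlocks_multiply]
    have h11 : (-1 : Matrix (Fin k) (Fin k) F) * -1 + B * -Bᵀ = 0 := by
      simp [Matrix.mul_neg, hBBt]
    have h12 : (-1 : Matrix (Fin k) (Fin k) F) * B + B * (Bᵀ * B) = 0 := by
      rw [← Matrix.mul_assoc, hBBt]; simp
    have h21 : -Bᵀ * (-1 : Matrix (Fin k) (Fin k) F) + Bᵀ * B * -Bᵀ = 0 := by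
      simp only [Matrix.mul_neg, Matrix.neg_mul, neg_neg, Matrix.mul_one,
        Matrix.mul_assoc, hBBt]
      abel
    have h22 : -Bᵀ * B + Bᵀ * B * (Bᵀ * B) = 0 := by
      rw [Matrix.mul_assoc, ← Matrix.mul_assoc B Bᵀ B, hBBt]; simp
    rw [h11, h12, h21, h22, Matrix.fromBlocks_zero]
  · rw [hA, Matrix.fromBlocks_add]
    simp [Matrix.fromBlocks_add]
end
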